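/- Let k ≥ 1 be a natural number and λ a nonzero complex number. The 2k×2k matrix H_{2k}(λ) is invertible and satisfies tr(H_{2k}(λ)ᵀ · H_{2k}(λ)⁻¹) = k·(λ + λ⁻¹). -/

import Mathlib

open Matrix

/-- The `k×k` upper-triangular Jordan block with eigenvalue `lam`. -/
def jordanBlock (k : ℕ) (lam : ℂ) : Matrix (Fin k) (Fin k) ℂ :=
  Matrix.of fun i j => if j = i then lam else if (j : ℕ) = (i : ℕ) + 1 then 1 else 0

/-- The `2k×2k` matrix `H_{2k}(lam) = [[0, I_k],[J_k(lam), 0]]`. -/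
def Hmat (k : ℕ) (lam : ℂ) : Matrix (Fin k ⊕ Fin k) (Fin k ⊕ Fin k) ℂ :=
  Matrix.fromBlocks 0 1 (jordanBlock k lam) 0

/-!
`H = [[0, I],[J, 0]]` has inverse `[[0, J⁻¹],[I, 0]]`, so `Hᵀ H⁻¹ = [[Jᵀ, 0],[0, J⁻¹]]` and the
trace is `tr J + tr J⁻¹`. Since `J` is upper triangular with diagonal `λ`, so is `J⁻¹` with
diagonal `λ⁻¹`, giving `kλ + kλ⁻¹`.
-/

namespace Matrix

section Triangular

variable {m K : Type*} [Fintype m] [LinearOrder m]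

theorem IsUpperTriangular.mul_apply_self {R : Type*} [NonUnitalNonAssocSemiring R]
    {M N : Matrix m m R} (hM : M.IsUpperTriangular) (hN : N.IsUpperTriangular) (i : m) :
    (M * N) i i = M i i * N i i := by
  rw [mul_apply]
  refine Finset.sum_eq_single i (fun l _ hli => ?_) (by simp)
  rcases lt_or_gt_of_ne hli with hl | hl
  · rw [hM hl, zero_mul]
  · rw [hN hl, mul_zero]

variable [DecidableEq m] [Field K] {M : Matrix m m K}

theorem IsUpperTriangular.nonsing_inv_apply_self (hM : M.IsUpperTriangular)
    (hdet : IsUnit M.det) (i : m) : M⁻¹ i i = (M i i)⁻¹ := by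
  have : Invertible M := invertibleOfIsUnitDet M hdet
  have hdiag := hM.mul_apply_self (blockTriangular_inv_of_blockTriangular hM) i
  rw [mul_nonsing_inv M hdet, one_apply_eq] at hdiag
  exact eq_inv_of_mul_eq_one_right hdiag.symm

theorem IsUpperTriangular.trace_nonsing_inv (hM : M.IsUpperTriangular) (hdet : IsUnit M.det) :
    M⁻¹.trace = ∑ i, (M i i)⁻¹ :=
  Finset.sum_congr rfl fun i _ => hM.nonsing_inv_apply_self hdet i

end Triangular

section Blocks

variable {n R : Type*} [Fintype n]

theorem trace_fromBlocks [AddCommMonoid R] (A B C D : Matrix n n R) :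
    (fromBlocks A B C D).trace = A.trace + D.trace := by
  simp [trace, Fintype.sum_sum_type]

variable [DecidableEq n] [CommRing R]

theorem fromBlocks_zero_one_mul_fromBlocks_zero_one (C D : Matrix n n R) :
    fromBlocks 0 1 C 0 * fromBlocks 0 D 1 0 = fromBlocks 1 0 0 (C * D) := by
  simp [fromBlocks_multiply]

theorem fromBlocks_zero_one_mul_fromBlocks_zero_nonsing_inv {C : Matrix n n R}
    (hC : IsUnit C.det) : fromBlocks 0 1 C 0 * fromBlocks 0 C⁻¹ 1 0 = 1 := by
  rw [fromBlocks_zero_one_mul_fromBlocks_zero_one, mul_nonsing_inv C hC, fromBlocks_one]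

-- Without the type ascription, `ᵀ *` here elaborates to `CStarMatrix` multiplication.
theorem trace_transpose_fromBlocks_zero_one_mul (C D : Matrix n n R) :
    ((fromBlocks 0 1 C 0 : Matrix (n ⊕ n) (n ⊕ n) R)ᵀ * fromBlocks 0 D 1 0).trace =
      C.trace + D.trace := by
  simp [fromBlocks_transpose, fromBlocks_multiply, trace_fromBlocks]

end Blocks

end Matrix

theorem jordanBlock_isUpperTriangular (k : ℕ) (lam : ℂ) : (jordanBlock k lam).IsUpperTriangular :=
  fun i j hji => by
    have hne : j ≠ i := ne_of_lt hji
    have : (j : ℕ) < i := hji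
    simp [jordanBlock, hne, show (j : ℕ) ≠ i + 1 by omega]

@[simp]
theorem jordanBlock_apply_self (k : ℕ) (lam : ℂ) (i : Fin k) : jordanBlock k lam i i = lam := by
  simp [jordanBlock]

theorem det_jordanBlock (k : ℕ) (lam : ℂ) : (jordanBlock k lam).det = lam ^ k := by
  simp [det_of_isUpperTriangular (jordanBlock_isUpperTriangular k lam)]

theorem isUnit_det_jordanBlock (k : ℕ) {lam : ℂ} (hlam : lam ≠ 0) :
    IsUnit (jordanBlock k lam).det := by
  rw [det_jordanBlock]
  exact hlam.isUnit.pow k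

theorem trace_jordanBlock (k : ℕ) (lam : ℂ) : (jordanBlock k lam).trace = k * lam := by
  simp [trace]

theorem trace_jordanBlock_inv (k : ℕ) {lam : ℂ} (hlam : lam ≠ 0) :
    (jordanBlock k lam)⁻¹.trace = k * lam⁻¹ := by
  simp [(jordanBlock_isUpperTriangular k lam).trace_nonsing_inv (isUnit_det_jordanBlock k hlam)]

theorem Hmat_isUnit_and_trace_general (k : ℕ) (lam : ℂ) (hlam : lam ≠ 0) :
    IsUnit (Hmat k lam) ∧
      ((Hmat k lam)ᵀ * (Hmat k lam)⁻¹).trace = (k : ℂ) * (lam + lam⁻¹) := by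
  have hmul :=
    fromBlocks_zero_one_mul_fromBlocks_zero_nonsing_inv (isUnit_det_jordanBlock k hlam)
  refine ⟨(isUnit_iff_isUnit_det _).mpr (isUnit_det_of_right_inverse hmul), ?_⟩
  rw [Hmat, inv_eq_right_inv hmul, trace_transpose_fromBlocks_zero_one_mul,
    trace_jordanBlock, trace_jordanBlock_inv k hlam]
  ring

/-- For `k ≥ 1` and nonzero `lam : ℂ`, the matrix `H_{2k}(lam)` is invertible and
`tr(H_{2k}(lam)ᵀ * H_{2k}(lam)⁻¹) = k * (lam + lam⁻¹)`. -/
theorem Hmat_isUnit_and_trace (k : ℕ) (hk : 1 ≤ k) (lam : ℂ) (hlam : lam ≠ 0) :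
    IsUnit (Hmat k lam) ∧
      ((Hmat k lam)ᵀ * (Hmat k lam)⁻¹).trace = (k : ℂ) * (lam + lam⁻¹) :=
  Hmat_isUnit_and_trace_general k lam hlam
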